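/- arXiv:2111.11678 — 2 statements merged into one kernel-verified Lean document; each statement's English description precedes it below -/
import Mathlib

section
/- Fix an integer d ≥ 1 and let β > 1/2. There exists a constant C > 0 depending only on β such that: if A, B : E × E → ℂ are infinite matrices with |A|_{β+} < ∞ and |B|_{β+} < ∞, then the product AB, defined by (AB)_a^c = Σ_{b∈E} A_a^b B_b^c (this series converges absolutely), satisfies |AB|_{β+} ≤ C·|A|_{β+}·|B|_{β+}. -/
open scoped Classical

/-- `hermiteDim d j` is the number of `d`-tuples of odd natural numbers summing to `j`,
i.e. the multiplicity `d_j` of the eigenvalue `j` of the `d`-dimensional harmonic oscillator. -/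
noncomputable def hermiteDim (d j : ℕ) : ℕ :=
  ((Finset.univ : Finset (Fin d → Fin (j + 1))).filter
    (fun f => (∀ i, Odd ((f i : ℕ))) ∧ ∑ i, ((f i : ℕ)) = j)).card

/-- The index set `E = {(j, l) : j ∈ Ê, 1 ≤ l ≤ d_j}`, encoded as pairs `⟨k, l⟩` where
`j = d + 2k` runs over `Ê = {d, d+2, …}` and `l` runs over a set of cardinality `d_j`. -/
abbrev IndexE (d : ℕ) : Type := Σ k : ℕ, Fin (hermiteDim d (d + 2 * k))

/-- The eigenvalue `w_a` attached to `a ∈ E`. -/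
def wE (d : ℕ) (a : IndexE d) : ℕ := d + 2 * a.1

/-- The operator norm of the block `A_{[j]}^{[j']}`, `j = d + 2k`, `j' = d + 2k'`, of an
infinite matrix `A : E × E → ℂ`, as a linear map between the corresponding Euclidean spaces. -/
noncomputable def blockNorm (d : ℕ) (A : IndexE d → IndexE d → ℂ) (k k' : ℕ) : ℝ :=
  ‖LinearMap.toContinuousLinearMap (Matrix.toEuclideanLin
      (Matrix.of fun (i : Fin (hermiteDim d (d + 2 * k)))
        (i' : Fin (hermiteDim d (d + 2 * k'))) => A ⟨k, i⟩ ⟨k', i'⟩))‖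

/-- The weight `(1 + ln j)^β (1 + ln j')^β` with `j = d + 2k`, `j' = d + 2k'`. -/
noncomputable def wtBeta (d : ℕ) (β : ℝ) (k k' : ℕ) : ℝ :=
  (1 + Real.log ((d : ℝ) + 2 * k)) ^ β * (1 + Real.log ((d : ℝ) + 2 * k')) ^ β

/-- The weight `(1 + |j - j'|)(1 + ln j)^β (1 + ln j')^β` with `j = d + 2k`, `j' = d + 2k'`. -/
noncomputable def wtBetaPlus (d : ℕ) (β : ℝ) (k k' : ℕ) : ℝ :=
  (1 + |((d : ℝ) + 2 * k) - ((d : ℝ) + 2 * k')|) * wtBeta d β k k'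

/-! The block norm of a product is at most `∑_{j''} ‖A_{[j]}^{[j'']}‖ ‖B_{[j'']}^{[j']}‖`: entrywise
this is Cauchy–Schwarz along a row of one block and a column of the other. Hence it suffices that
the weight `w(j, j') = (1 + |j - j'|)(1 + ln j)^β (1 + ln j')^β` satisfies
`∑_{j''} w(j, j') / (w(j, j'') w(j'', j')) ≤ C` uniformly in `j, j'`. As
`1 + |j - j'| ≤ (1 + |j - j''|) + (1 + |j'' - j'|)`, each summand is at most
`(1 + |j - j''|)⁻¹ (1 + ln j'')^{-2β}` plus the same with `j'`. Writing `j = d + 2k`,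
`j'' = d + 2k''`, such a term is bounded by the term of index `min(|k - k''|, k'')` of the
Bertrand series `∑ₙ ((1 + n)(1 + ln(1 + n))^{2β})⁻¹`, which converges because `2β > 1`. -/

open Matrix
open scoped Matrix.Norms.L2Operator

section L2OpNorm

variable {𝕜 : Type*} [RCLike 𝕜] {l m n : Type*} [Fintype l] [Fintype m] [Fintype n]

lemma Matrix.sqrt_sum_norm_sq_col_le_l2_opNorm (A : Matrix m n 𝕜) (j : n) :
    √(∑ i, ‖A i j‖ ^ 2) ≤ ‖A‖ := by
  simpa [EuclideanSpace.norm_eq] using A.l2_opNorm_mulVec (EuclideanSpace.single j 1)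

lemma Matrix.sqrt_sum_norm_sq_row_le_l2_opNorm (A : Matrix m n 𝕜) (i : m) :
    √(∑ j, ‖A i j‖ ^ 2) ≤ ‖A‖ := by
  simpa [l2_opNorm_conjTranspose] using (Aᴴ).sqrt_sum_norm_sq_col_le_l2_opNorm i

lemma Matrix.sum_norm_mul_norm_le_l2_opNorm_mul (A : Matrix l m 𝕜) (B : Matrix m n 𝕜)
    (i : l) (k : n) : ∑ j, ‖A i j‖ * ‖B j k‖ ≤ ‖A‖ * ‖B‖ :=
  (Real.sum_mul_le_sqrt_mul_sqrt _ _ _).trans <|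
    mul_le_mul (A.sqrt_sum_norm_sq_row_le_l2_opNorm i) (B.sqrt_sum_norm_sq_col_le_l2_opNorm k)
      (Real.sqrt_nonneg _) (norm_nonneg _)

end L2OpNorm

section SigmaBlock

variable {𝕜 : Type*} [RCLike 𝕜] {ι : Type*} {κ : ι → Type*} [∀ i, Fintype (κ i)]

def Matrix.sigmaBlock (A : (Σ i, κ i) → (Σ i, κ i) → 𝕜) (i i' : ι) : Matrix (κ i) (κ i') 𝕜 :=
  Matrix.of fun a b => A ⟨i, a⟩ ⟨i', b⟩

variable (A B : (Σ i, κ i) → (Σ i, κ i) → 𝕜) {i i' : ι}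

lemma summable_norm_mul_of_summable_norm_sigmaBlock_mul
    (h : Summable fun i'' => ‖sigmaBlock A i i''‖ * ‖sigmaBlock B i'' i'‖) (a : κ i) (c : κ i') :
    Summable fun b => ‖A ⟨i, a⟩ b * B b ⟨i', c⟩‖ := by
  refine (summable_sigma_of_nonneg fun _ => norm_nonneg _).2 ⟨fun _ => (hasSum_fintype _).summable,
    h.of_nonneg_of_le (fun _ => tsum_nonneg fun _ => norm_nonneg _) fun i'' => ?_⟩
  simp only [tsum_fintype, norm_mul]
  exact (sigmaBlock A i i'').sum_norm_mul_norm_le_l2_opNorm_mul (sigmaBlock B i'' i') a c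

lemma summable_norm_sigmaBlock_mul
    (h : Summable fun i'' => ‖sigmaBlock A i i''‖ * ‖sigmaBlock B i'' i'‖) :
    Summable fun i'' => ‖sigmaBlock A i i'' * sigmaBlock B i'' i'‖ :=
  h.of_nonneg_of_le (fun _ => norm_nonneg _) fun _ => l2_opNorm_mul _ _

lemma sigmaBlock_tsum_mul (h : Summable fun i'' => ‖sigmaBlock A i i''‖ * ‖sigmaBlock B i'' i'‖) :
    sigmaBlock (fun a c => ∑' b, A a b * B b c) i i' =
      ∑' i'', sigmaBlock A i i'' * sigmaBlock B i'' i' := by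
  ext a c
  have hac := ((summable_norm_sigmaBlock_mul A B h).of_norm.hasSum.map
    (entryLinearMap 𝕜 𝕜 a c) (LinearMap.continuous_of_finiteDimensional _)).tsum_eq
  refine Eq.trans ?_ hac
  simp only [sigmaBlock, of_apply, Function.comp_apply, entryLinearMap_apply, mul_apply]
  rw [((summable_norm_mul_of_summable_norm_sigmaBlock_mul A B h a c).of_norm).tsum_sigma]
  simp [tsum_fintype]

lemma norm_sigmaBlock_tsum_mul_le
    (h : Summable fun i'' => ‖sigmaBlock A i i''‖ * ‖sigmaBlock B i'' i'‖) :
    ‖sigmaBlock (fun a c => ∑' b, A a b * B b c) i i'‖ ≤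
      ∑' i'', ‖sigmaBlock A i i''‖ * ‖sigmaBlock B i'' i'‖ := by
  rw [sigmaBlock_tsum_mul A B h]
  exact (norm_tsum_le_tsum_norm (f := fun i'' => sigmaBlock A i i'' * sigmaBlock B i'' i')
    (summable_norm_sigmaBlock_mul A B h)).trans
    (Summable.tsum_le_tsum (fun _ => l2_opNorm_mul _ _) (summable_norm_sigmaBlock_mul A B h) h)

theorem summable_and_norm_sigmaBlock_tsum_mul_le_of_weight {w : ι → ι → ℝ}
    (hw : ∀ i i', 0 < w i i') {C : ℝ}
    (hws : ∀ i i', Summable fun i'' => w i i' / (w i i'' * w i'' i'))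
    (hwC : ∀ i i', ∑' i'', w i i' / (w i i'' * w i'' i') ≤ C) {MA MB : ℝ}
    (hA : ∀ i i', w i i' * ‖sigmaBlock A i i'‖ ≤ MA)
    (hB : ∀ i i', w i i' * ‖sigmaBlock B i i'‖ ≤ MB) :
    (∀ a c, Summable fun b => ‖A a b * B b c‖) ∧
      ∀ i i', w i i' * ‖sigmaBlock (fun a c => ∑' b, A a b * B b c) i i'‖ ≤ C * MA * MB := by
  have hwA : ∀ i i', 0 ≤ w i i' * ‖sigmaBlock A i i'‖ := fun i i' =>
    mul_nonneg (hw i i').le (norm_nonneg _)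
  have hwB : ∀ i i', 0 ≤ w i i' * ‖sigmaBlock B i i'‖ := fun i i' =>
    mul_nonneg (hw i i').le (norm_nonneg _)
  have hweighted : ∀ i i' i'', w i i' * (‖sigmaBlock A i i''‖ * ‖sigmaBlock B i'' i'‖) ≤
      w i i' / (w i i'' * w i'' i') * (MA * MB) := by
    intro i i' i''
    calc w i i' * (‖sigmaBlock A i i''‖ * ‖sigmaBlock B i'' i'‖)
        = w i i' / (w i i'' * w i'' i') *
            ((w i i'' * ‖sigmaBlock A i i''‖) * (w i'' i' * ‖sigmaBlock B i'' i'‖)) := by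
          field_simp [(hw i i'').ne', (hw i'' i').ne']
      _ ≤ _ := mul_le_mul_of_nonneg_left
          (mul_le_mul (hA i i'') (hB i'' i') (hwB i'' i') ((hwA i i).trans (hA i i)))
          (div_nonneg (hw i i').le (mul_pos (hw i i'') (hw i'' i')).le)
  have hblocks : ∀ i i', Summable fun i'' => ‖sigmaBlock A i i''‖ * ‖sigmaBlock B i'' i'‖ := by
    intro i i'
    refine (((hws i i').mul_right (MA * MB)).div_const (w i i')).of_nonneg_of_le
      (fun _ => by positivity) fun i'' => ?_
    rw [le_div_iff₀' (hw i i')]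
    exact hweighted i i' i''
  refine ⟨fun ⟨i, a⟩ ⟨i', c⟩ =>
    summable_norm_mul_of_summable_norm_sigmaBlock_mul A B (hblocks i i') a c, fun i i' => ?_⟩
  calc w i i' * ‖sigmaBlock (fun a c => ∑' b, A a b * B b c) i i'‖
      ≤ w i i' * ∑' i'', ‖sigmaBlock A i i''‖ * ‖sigmaBlock B i'' i'‖ := by
        gcongr
        · exact (hw i i').le
        · exact norm_sigmaBlock_tsum_mul_le A B (hblocks i i')
    _ = ∑' i'', w i i' * (‖sigmaBlock A i i''‖ * ‖sigmaBlock B i'' i'‖) := tsum_mul_left.symm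
    _ ≤ ∑' i'', w i i' / (w i i'' * w i'' i') * (MA * MB) :=
        Summable.tsum_le_tsum (hweighted i i') ((hblocks i i').mul_left _)
          ((hws i i').mul_right _)
    _ = (∑' i'', w i i' / (w i i'' * w i'' i')) * (MA * MB) := tsum_mul_right
    _ ≤ C * MA * MB := by
        rw [mul_assoc]
        exact mul_le_mul_of_nonneg_right (hwC i i')
          (mul_nonneg ((hwA i i).trans (hA i i)) ((hwB i i).trans (hB i i)))

end SigmaBlock

section Bertrand

noncomputable def bertrandTerm (p : ℝ) (n : ℕ) : ℝ :=
  ((1 + n) * (1 + Real.log (1 + n)) ^ p)⁻¹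

variable {p : ℝ}

lemma one_le_one_add_log {x : ℝ} (hx : 1 ≤ x) : 1 ≤ 1 + Real.log x := by
  linarith [Real.log_nonneg hx]

lemma bertrandTerm_pos (p : ℝ) (n : ℕ) : 0 < bertrandTerm p n := by
  have := one_le_one_add_log (x := 1 + n) (by simp)
  unfold bertrandTerm
  exact inv_pos.2 (mul_pos (by positivity) (Real.rpow_pos_of_pos (by linarith) p))

lemma bertrandTerm_antitone (hp : 0 ≤ p) : Antitone (bertrandTerm p) := by
  intro m n hmn
  have := one_le_one_add_log (x := 1 + m) (by simp)
  unfold bertrandTerm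
  gcongr

theorem summable_bertrandTerm (hp : 1 < p) : Summable (bertrandTerm p) := by
  rw [← summable_condensed_iff_of_nonneg (fun n => (bertrandTerm_pos p n).le)
    fun m n _ h => bertrandTerm_antitone (by linarith) h]
  refine (((Real.summable_one_div_nat_add_rpow 1 p).2 hp).mul_left (2 ^ p)).of_nonneg_of_le
    (fun n => mul_nonneg (by positivity) (bertrandTerm_pos p _).le) fun n => ?_
  have hlog : ((n : ℝ) + 1) / 2 ≤ 1 + Real.log (1 + ((2 ^ n : ℕ) : ℝ)) := by
    have : (n : ℝ) * Real.log 2 ≤ Real.log (1 + ((2 ^ n : ℕ) : ℝ)) := by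
      rw [← Real.log_pow]
      gcongr
      push_cast
      linarith
    nlinarith [Real.log_two_gt_d9]
  rw [abs_of_pos (by positivity), bertrandTerm]
  calc (2 : ℝ) ^ n * ((1 + ((2 ^ n : ℕ) : ℝ)) * (1 + Real.log (1 + ((2 ^ n : ℕ) : ℝ))) ^ p)⁻¹
      ≤ 2 ^ n * (2 ^ n * (((n : ℝ) + 1) / 2) ^ p)⁻¹ := by
        gcongr
        push_cast
        linarith
    _ = 2 ^ p * (1 / ((n : ℝ) + 1) ^ p) := by
        rw [Real.div_rpow (by positivity) zero_le_two]
        field_simp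

lemma tsum_bertrandTerm_pos (hp : 1 < p) : 0 < ∑' n, bertrandTerm p n :=
  (summable_bertrandTerm hp).tsum_pos (fun n => (bertrandTerm_pos p n).le) 0 (bertrandTerm_pos p 0)

end Bertrand

lemma comp_dist_add_right (f : ℕ → ℝ) (m : ℕ) : (fun n => f (Nat.dist (n + m) m)) = f :=
  funext fun n => by rw [Nat.dist_eq_sub_of_le_right (by omega), Nat.add_sub_cancel]

lemma summable_comp_dist {f : ℕ → ℝ} (hf : Summable f) (m : ℕ) :
    Summable fun n => f (Nat.dist n m) :=
  (summable_nat_add_iff m).1 <| by rwa [comp_dist_add_right]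

lemma tsum_comp_dist_le {f : ℕ → ℝ} (hf : Summable f) (hf0 : ∀ n, 0 ≤ f n) (m : ℕ) :
    ∑' n, f (Nat.dist n m) ≤ 2 * ∑' n, f n := by
  have hhead : ∑ n ∈ Finset.range m, f (Nat.dist n m) ≤ ∑' n, f n :=
    calc ∑ n ∈ Finset.range m, f (Nat.dist n m)
        = ∑ n ∈ Finset.range m, f (m - n) :=
          Finset.sum_congr rfl fun n hn => by
            rw [Nat.dist_eq_sub_of_le (Finset.mem_range.1 hn).le]
      _ = ∑ j ∈ (Finset.range m).image (m - ·), f j :=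
          (Finset.sum_image fun a ha b hb h => by
            simp only [Finset.coe_range, Set.mem_Iio] at ha hb h; omega).symm
      _ ≤ ∑' n, f n := hf.sum_le_tsum _ fun n _ => hf0 n
  rw [← (summable_comp_dist hf m).sum_add_tsum_nat_add m, comp_dist_add_right]
  linarith

lemma Nat.cast_dist_eq_abs (m n : ℕ) : ((Nat.dist m n : ℕ) : ℝ) = |(m : ℝ) - n| := by
  rcases le_total m n with h | h
  · rw [Nat.dist_eq_sub_of_le h, Nat.cast_sub h, abs_sub_comm, abs_of_nonneg (by simpa using h)]
  · rw [Nat.dist_eq_sub_of_le_right h, Nat.cast_sub h, abs_of_nonneg (by simpa using h)]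

section Weight

variable {d : ℕ} {β p : ℝ}

lemma wtBetaPlus_eq (k k' : ℕ) :
    wtBetaPlus d β k k' = (1 + 2 * (Nat.dist k k' : ℝ)) *
      ((1 + Real.log ((d : ℝ) + 2 * k)) ^ β * (1 + Real.log ((d : ℝ) + 2 * k')) ^ β) := by
  rw [wtBetaPlus, wtBeta, Nat.cast_dist_eq_abs,
    show (d : ℝ) + 2 * k - (d + 2 * k') = 2 * (k - k') by ring, abs_mul, abs_two]

lemma one_le_one_add_log_add_two_mul (hd : 1 ≤ d) (k : ℕ) :
    1 ≤ 1 + Real.log ((d : ℝ) + 2 * k) := by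
  have : (1 : ℝ) ≤ d := by exact_mod_cast hd
  exact one_le_one_add_log (by linarith [(Nat.cast_nonneg k : (0 : ℝ) ≤ k)])

lemma wtBetaPlus_pos (hd : 1 ≤ d) (k k' : ℕ) : 0 < wtBetaPlus d β k k' := by
  have hk := one_le_one_add_log_add_two_mul hd k
  have hk' := one_le_one_add_log_add_two_mul hd k'
  rw [wtBetaPlus_eq]
  exact mul_pos (by positivity)
    (mul_pos (Real.rpow_pos_of_pos (by linarith) β) (Real.rpow_pos_of_pos (by linarith) β))

lemma inv_bertrandTerm_le (hd : 1 ≤ d) (hp : 0 ≤ p) {s t n : ℕ} (hst : s ≤ t) (hsn : s ≤ n) :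
    (bertrandTerm p s)⁻¹ ≤ (1 + 2 * (t : ℝ)) * (1 + Real.log ((d : ℝ) + 2 * n)) ^ p := by
  have := one_le_one_add_log (x := 1 + s) (by simp)
  have hd' : (1 : ℝ) ≤ d := by exact_mod_cast hd
  have hst' : (s : ℝ) ≤ t := by exact_mod_cast hst
  have hsn' : (s : ℝ) ≤ n := by exact_mod_cast hsn
  rw [bertrandTerm, inv_inv]
  gcongr <;> linarith

lemma one_le_bertrandTerm_add_mul (hd : 1 ≤ d) (hp : 0 ≤ p) (t n : ℕ) :
    1 ≤ (bertrandTerm p t + bertrandTerm p n) *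
      ((1 + 2 * (t : ℝ)) * (1 + Real.log ((d : ℝ) + 2 * n)) ^ p) := by
  have ht := bertrandTerm_pos p t
  have hn := bertrandTerm_pos p n
  have hmin : bertrandTerm p (min t n) ≤ bertrandTerm p t + bertrandTerm p n := by
    rcases min_cases t n with ⟨h, _⟩ | ⟨h, _⟩ <;> rw [h] <;> linarith
  calc (1 : ℝ) = bertrandTerm p (min t n) * (bertrandTerm p (min t n))⁻¹ :=
        (mul_inv_cancel₀ (bertrandTerm_pos p _).ne').symm
    _ ≤ _ := mul_le_mul hmin (inv_bertrandTerm_le hd hp (min_le_left t n) (min_le_right t n))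
        (inv_nonneg.2 (bertrandTerm_pos p _).le) (by linarith)

lemma wtBetaPlus_div_le (hd : 1 ≤ d) (hβ : 0 ≤ β) (k k' k'' : ℕ) :
    wtBetaPlus d β k k' / (wtBetaPlus d β k k'' * wtBetaPlus d β k'' k') ≤
      (bertrandTerm (2 * β) (Nat.dist k'' k) + bertrandTerm (2 * β) k'') +
        (bertrandTerm (2 * β) (Nat.dist k'' k') + bertrandTerm (2 * β) k'') := by
  rw [div_le_iff₀ (mul_pos (wtBetaPlus_pos hd k k'') (wtBetaPlus_pos hd k'' k')),
    wtBetaPlus_eq, wtBetaPlus_eq, wtBetaPlus_eq, Nat.dist_comm k k'']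
  have h1 := one_le_bertrandTerm_add_mul hd (by linarith : 0 ≤ 2 * β) (Nat.dist k'' k) k''
  have h2 := one_le_bertrandTerm_add_mul hd (by linarith : 0 ≤ 2 * β) (Nat.dist k'' k') k''
  have hLL := Real.rpow_add (zero_lt_one.trans_le (one_le_one_add_log_add_two_mul hd k'')) β β
  rw [← two_mul] at hLL
  rw [hLL] at h1 h2
  have hx := Real.rpow_nonneg (zero_le_one.trans (one_le_one_add_log_add_two_mul hd k)) β
  have hy := Real.rpow_nonneg (zero_le_one.trans (one_le_one_add_log_add_two_mul hd k')) β
  have htri : (Nat.dist k k' : ℝ) ≤ Nat.dist k'' k + Nat.dist k'' k' := by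
    exact_mod_cast Nat.dist_comm k k'' ▸ Nat.dist.triangle_inequality k k'' k'
  set P := bertrandTerm (2 * β) (Nat.dist k'' k) + bertrandTerm (2 * β) k''
  set Q := bertrandTerm (2 * β) (Nat.dist k'' k') + bertrandTerm (2 * β) k''
  set a : ℝ := 1 + 2 * (Nat.dist k'' k : ℝ)
  set b : ℝ := 1 + 2 * (Nat.dist k'' k' : ℝ)
  set z := (1 + Real.log ((d : ℝ) + 2 * k'')) ^ β
  have hc : 1 + 2 * (Nat.dist k k' : ℝ) ≤ (P + Q) * (a * b * (z * z)) :=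
    calc 1 + 2 * (Nat.dist k k' : ℝ) ≤ a + b := by linarith
      _ ≤ a * (Q * (b * (z * z))) + b * (P * (a * (z * z))) := by
          gcongr
          · exact le_mul_of_one_le_right (by positivity) h2
          · exact le_mul_of_one_le_right (by positivity) h1
      _ = (P + Q) * (a * b * (z * z)) := by ring
  calc _ ≤ (P + Q) * (a * b * (z * z)) * ((1 + Real.log ((d : ℝ) + 2 * k)) ^ β *
        (1 + Real.log ((d : ℝ) + 2 * k')) ^ β) := by gcongr
    _ = _ := by ring

lemma summable_wtBetaPlus_div (hd : 1 ≤ d) (hβ : 1 / 2 < β) (k k' : ℕ) :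
    Summable fun k'' => wtBetaPlus d β k k' / (wtBetaPlus d β k k'' * wtBetaPlus d β k'' k') := by
  have hs := summable_bertrandTerm (p := 2 * β) (by linarith)
  refine Summable.of_nonneg_of_le (fun k'' => ?_) (wtBetaPlus_div_le hd (by linarith) k k')
    (((summable_comp_dist hs k).add hs).add ((summable_comp_dist hs k').add hs))
  exact div_nonneg (wtBetaPlus_pos hd k k').le
    (mul_pos (wtBetaPlus_pos hd k k'') (wtBetaPlus_pos hd k'' k')).le

lemma tsum_wtBetaPlus_div_le (hd : 1 ≤ d) (hβ : 1 / 2 < β) (k k' : ℕ) :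
    ∑' k'', wtBetaPlus d β k k' / (wtBetaPlus d β k k'' * wtBetaPlus d β k'' k') ≤
      6 * ∑' n, bertrandTerm (2 * β) n := by
  have hs := summable_bertrandTerm (p := 2 * β) (by linarith)
  have hs0 := fun n => (bertrandTerm_pos (2 * β) n).le
  refine (Summable.tsum_le_tsum (wtBetaPlus_div_le hd (by linarith) k k')
    (summable_wtBetaPlus_div hd hβ k k')
    (((summable_comp_dist hs k).add hs).add ((summable_comp_dist hs k').add hs))).trans ?_
  rw [Summable.tsum_add ((summable_comp_dist hs k).add hs) ((summable_comp_dist hs k').add hs),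
    Summable.tsum_add (summable_comp_dist hs k) hs, Summable.tsum_add (summable_comp_dist hs k') hs]
  linarith [tsum_comp_dist_le hs hs0 k, tsum_comp_dist_le hs hs0 k']

end Weight

theorem stmt6 (d : ℕ) (hd : 1 ≤ d) (β : ℝ) (hβ : 1 / 2 < β) :
    ∃ C > 0, ∀ (A B : IndexE d → IndexE d → ℂ) (MA MB : ℝ),
      (∀ k k', wtBetaPlus d β k k' * blockNorm d A k k' ≤ MA) →
      (∀ k k', wtBetaPlus d β k k' * blockNorm d B k k' ≤ MB) →
      (∀ a c : IndexE d, Summable (fun b : IndexE d => ‖A a b * B b c‖)) ∧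
      (∀ k k', wtBetaPlus d β k k' *
        blockNorm d (fun a c => ∑' b : IndexE d, A a b * B b c) k k' ≤ C * MA * MB) := by
  refine ⟨6 * ∑' n, bertrandTerm (2 * β) n,
    mul_pos (by norm_num) (tsum_bertrandTerm_pos (by linarith)), fun A B MA MB hA hB => ?_⟩
  exact summable_and_norm_sigmaBlock_tsum_mul_le_of_weight A B (wtBetaPlus_pos hd)
    (summable_wtBetaPlus_div hd hβ) (tsum_wtBetaPlus_div_le hd hβ) hA hB
end

section
/- Fix an integer d ≥ 1, let β > 1/2 and let s ≥ 1. There exists a constant C > 0 depending only on β such that: if A : E × E → ℂ is an infinite matrix with |A|_β < ∞, then for every ξ : E → ℂ with Σ_{a∈E} w_a^s |ξ_a|² < ∞, the series (Aξ)_a = Σ_{b∈E} A_a^b ξ_b converges absolutely for every a ∈ E, and Σ_{a∈E} w_a^{−s} |(Aξ)_a|² ≤ C² · |A|_β² · Σ_{a∈E} w_a^s |ξ_a|². That is, A is a bounded operator from ℓ²_s to ℓ²_{−s} with norm at most C·|A|_β. -/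
open scoped Classical

/-!
Split `E` into the blocks `[j]`, `j = d + 2k`, and write `A_{kk'}`, `ξ_k` for the blocks of `A`
and `ξ`. The hypothesis is the rank-one domination `‖A_{kk'}‖ ≤ |A|_β a_k a_{k'}` with
`a_k = (1 + ln j)^{-β}`, so `‖(Aξ)_k‖ ≤ |A|_β a_k T` where `T = ∑_{k'} a_{k'} ‖ξ_{k'}‖`, and
Cauchy–Schwarz gives `T² ≤ c ‖ξ‖_s²` with `c = ∑_k a_k² j^{-s}`. Hence
`‖Aξ‖_{-s}² ≤ |A|_β² T² c ≤ c² |A|_β² ‖ξ‖_s²`. Since `s ≥ 1`, `c` is at most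
`∑_n 1 / (n (1 + ln n)^{2β})`, which converges for `2β > 1` by Cauchy condensation.
-/

open scoped Matrix Matrix.Norms.L2Operator

section MatrixRows

variable {𝕜 : Type*} [RCLike 𝕜] {m n : Type*} [Fintype m] [Fintype n]

lemma Matrix.sqrt_sum_norm_sq_le_l2_opNorm (M : Matrix m n 𝕜) (i : m) :
    √(∑ j, ‖M i j‖ ^ 2) ≤ ‖M‖ := by
  have h := Mᴴ.l2_opNorm_mulVec (EuclideanSpace.single i 1)
  rw [l2_opNorm_conjTranspose, PiLp.norm_single, norm_one, mul_one] at h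
  convert h using 1
  rw [EuclideanSpace.norm_eq]
  simp

lemma Matrix.sum_norm_mul_le_l2_opNorm_mul (M : Matrix m n 𝕜) (i : m) (x : EuclideanSpace 𝕜 n) :
    ∑ j, ‖M i j * x j‖ ≤ ‖M‖ * ‖x‖ :=
  calc ∑ j, ‖M i j * x j‖ = ∑ j, ‖M i j‖ * ‖x j‖ := by simp only [norm_mul]
    _ ≤ √(∑ j, ‖M i j‖ ^ 2) * √(∑ j, ‖x j‖ ^ 2) := Real.sum_mul_le_sqrt_mul_sqrt _ _ _
    _ ≤ ‖M‖ * ‖x‖ := by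
      rw [← EuclideanSpace.norm_eq]
      gcongr
      exact M.sqrt_sum_norm_sq_le_l2_opNorm i

lemma Matrix.norm_toEuclideanLin_le (M : Matrix m n 𝕜) (x : EuclideanSpace 𝕜 n) :
    ‖toEuclideanLin M x‖ ≤ ‖M‖ * ‖x‖ :=
  M.l2_opNorm_mulVec x

end MatrixRows

lemma tsum_sq_le_tsum_mul_tsum_of_sq_le_mul {ι : Type*} {r f g : ι → ℝ} (hr : ∀ i, 0 ≤ r i)
    (hf : ∀ i, 0 ≤ f i) (hg : ∀ i, 0 ≤ g i) (hrfg : ∀ i, r i ^ 2 ≤ f i * g i)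
    (hfs : Summable f) (hgs : Summable g) :
    Summable r ∧ (∑' i, r i) ^ 2 ≤ (∑' i, f i) * ∑' i, g i := by
  have hrs : Summable r := (hfs.add hgs).of_nonneg_of_le hr fun i => by
    nlinarith [hrfg i, hf i, hg i, hr i]
  refine ⟨hrs, ?_⟩
  have hFG : 0 ≤ (∑' i, f i) * ∑' i, g i := mul_nonneg (tsum_nonneg hf) (tsum_nonneg hg)
  have hle : ∑' i, r i ≤ √((∑' i, f i) * ∑' i, g i) := by
    refine hrs.tsum_le_of_sum_le fun s => ?_
    rw [Real.le_sqrt (Finset.sum_nonneg fun i _ => hr i) hFG]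
    calc (∑ i ∈ s, r i) ^ 2 ≤ (∑ i ∈ s, f i) * ∑ i ∈ s, g i :=
          Finset.sum_sq_le_sum_mul_sum_of_sq_le_mul s (fun i _ => hf i) (fun i _ => hg i)
            fun i _ => hrfg i
      _ ≤ (∑' i, f i) * ∑' i, g i :=
          mul_le_mul (hfs.sum_le_tsum s fun i _ => hf i) (hgs.sum_le_tsum s fun i _ => hg i)
            (Finset.sum_nonneg fun i _ => hg i) (tsum_nonneg hf)
  calc (∑' i, r i) ^ 2 ≤ √((∑' i, f i) * ∑' i, g i) ^ 2 := by
        gcongr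
        exact tsum_nonneg hr
    _ = _ := Real.sq_sqrt hFG

open Real in
lemma summable_inv_nat_mul_one_add_log_rpow {p : ℝ} (hp : 1 < p) :
    Summable fun n : ℕ => ((n : ℝ) * (1 + log n) ^ p)⁻¹ := by
  have hanti : ∀ ⦃m n : ℕ⦄, 0 < m → m ≤ n →
      ((n : ℝ) * (1 + log n) ^ p)⁻¹ ≤ ((m : ℝ) * (1 + log m) ^ p)⁻¹ := by
    intro m n hm hmn
    have hmn' : (m : ℝ) ≤ n := by exact_mod_cast hmn
    have := log_le_log (by positivity) hmn'
    have := log_nonneg (by exact_mod_cast hm : (1 : ℝ) ≤ m)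
    gcongr
  rw [← summable_condensed_iff_of_nonneg (fun n => by positivity) hanti]
  have hlog2 : 0 < log 2 := log_pos one_lt_two
  have hcondensed : ∀ n : ℕ, (2 : ℝ) ^ n * (((2 ^ n : ℕ) : ℝ) * (1 + log (2 ^ n : ℕ)) ^ p)⁻¹
      = ((1 + n * log 2) ^ p)⁻¹ := by
    intro n
    push_cast
    rw [log_pow, mul_inv, ← mul_assoc, mul_inv_cancel₀ (by positivity), one_mul]
  simp only [hcondensed]
  have hbound : ∀ n : ℕ, ((1 + n * log 2) ^ p)⁻¹ ≤ (log 2 ^ p)⁻¹ * (((n : ℝ) + 1) ^ p)⁻¹ := by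
    intro n
    rw [← mul_inv, ← mul_rpow hlog2.le (by positivity)]
    have : log 2 ≤ 1 := by linarith [log_le_sub_one_of_pos (zero_lt_two' ℝ)]
    gcongr
    nlinarith
  refine .of_nonneg_of_le (fun n => by positivity) hbound (Summable.mul_left _ ?_)
  exact_mod_cast (summable_nat_add_iff 1).2 (summable_nat_rpow_inv.2 hp)

open Real in
lemma inv_rpow_sq_div_rpow_le_inv_mul_rpow {x β s : ℝ} (hx : 1 ≤ x) (hs : 1 ≤ s) :
    ((1 + log x) ^ β)⁻¹ ^ 2 / x ^ s ≤ (x * (1 + log x) ^ (2 * β))⁻¹ := by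
  have hlog : 0 < 1 + log x := by linarith [log_nonneg hx]
  have hpow : ((1 + log x) ^ β) ^ 2 = (1 + log x) ^ (2 * β) := by
    rw [← rpow_natCast, ← rpow_mul hlog.le, mul_comm]
    norm_num
  have hxs : x ≤ x ^ s := by simpa using rpow_le_rpow_of_exponent_le hx hs
  rw [inv_pow, hpow, div_eq_mul_inv, ← mul_inv, mul_comm]
  gcongr

section SigmaFintype

variable {K : Type*} {ι : K → Type*} [∀ k, Fintype (ι k)]

lemma summable_sigma_iff_of_fintype {f : (Σ k, ι k) → ℝ} (hf : ∀ x, 0 ≤ f x) :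
    Summable f ↔ Summable fun k => ∑ i, f ⟨k, i⟩ := by
  simp [summable_sigma_of_nonneg hf, tsum_fintype, Summable.of_finite]

lemma Summable.tsum_sigma_of_fintype {α : Type*} [AddCommMonoid α] [TopologicalSpace α]
    [ContinuousAdd α] [T3Space α] {f : (Σ k, ι k) → α} (hf : Summable f) :
    ∑' x, f x = ∑' k, ∑ i, f ⟨k, i⟩ := by
  simp [hf.tsum_sigma' fun _ => .of_finite, tsum_fintype]

end SigmaFintype

section Blocks

variable {𝕜 : Type*} [RCLike 𝕜] {K : Type*} {ι : K → Type*} [∀ k, Fintype (ι k)]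

def blockMatrix (A : (Σ k, ι k) → (Σ k, ι k) → 𝕜) (k k' : K) : Matrix (ι k) (ι k') 𝕜 :=
  Matrix.of fun i i' => A ⟨k, i⟩ ⟨k', i'⟩

def blockVector (ξ : (Σ k, ι k) → 𝕜) (k : K) : EuclideanSpace 𝕜 (ι k) :=
  WithLp.toLp 2 fun i => ξ ⟨k, i⟩

lemma summable_mul_norm_sq_iff_blockVector {w : K → ℝ} (hw : ∀ k, 0 ≤ w k)
    (ξ : (Σ k, ι k) → 𝕜) :
    Summable (fun x : Σ k, ι k => w x.1 * ‖ξ x‖ ^ 2) ↔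
      Summable fun k => w k * ‖blockVector ξ k‖ ^ 2 := by
  rw [summable_sigma_iff_of_fintype fun x => by have := hw x.1; positivity]
  simp only [← Finset.mul_sum, EuclideanSpace.norm_sq_eq]
  rfl

lemma tsum_mul_norm_sq_eq_blockVector {w : K → ℝ} (hw : ∀ k, 0 ≤ w k) (ξ : (Σ k, ι k) → 𝕜) :
    ∑' x : Σ k, ι k, w x.1 * ‖ξ x‖ ^ 2 = ∑' k, w k * ‖blockVector ξ k‖ ^ 2 := by
  by_cases h : Summable fun x : Σ k, ι k => w x.1 * ‖ξ x‖ ^ 2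
  · simp only [h.tsum_sigma_of_fintype, ← Finset.mul_sum, EuclideanSpace.norm_sq_eq]
    rfl
  · rw [tsum_eq_zero_of_not_summable h,
      tsum_eq_zero_of_not_summable ((summable_mul_norm_sq_iff_blockVector hw ξ).not.1 h)]

variable {A : (Σ k, ι k) → (Σ k, ι k) → 𝕜} {ξ : (Σ k, ι k) → 𝕜} {a : K → ℝ} {M : ℝ}

lemma summable_norm_mul_of_norm_blockMatrix_le
    (hA : ∀ k k', ‖blockMatrix A k k'‖ ≤ M * (a k * a k'))
    (hT : Summable fun k => a k * ‖blockVector ξ k‖) (x : Σ k, ι k) :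
    Summable fun y => ‖A x y * ξ y‖ := by
  obtain ⟨k, i⟩ := x
  rw [summable_sigma_iff_of_fintype fun _ => norm_nonneg _]
  refine (hT.mul_left (M * a k)).of_nonneg_of_le (fun _ => by positivity) fun k' => ?_
  calc ∑ i', ‖A ⟨k, i⟩ ⟨k', i'⟩ * ξ ⟨k', i'⟩‖
      ≤ ‖blockMatrix A k k'‖ * ‖blockVector ξ k'‖ :=
        (blockMatrix A k k').sum_norm_mul_le_l2_opNorm_mul i (blockVector ξ k')
    _ ≤ M * (a k * a k') * ‖blockVector ξ k'‖ := by gcongr; exact hA k k'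
    _ = M * a k * (a k' * ‖blockVector ξ k'‖) := by ring

lemma norm_toEuclideanLin_blockMatrix_le
    (hA : ∀ k k', ‖blockMatrix A k k'‖ ≤ M * (a k * a k')) (k k' : K) :
    ‖Matrix.toEuclideanLin (blockMatrix A k k') (blockVector ξ k')‖ ≤
      M * a k * (a k' * ‖blockVector ξ k'‖) :=
  calc _ ≤ ‖blockMatrix A k k'‖ * ‖blockVector ξ k'‖ := Matrix.norm_toEuclideanLin_le _ _
    _ ≤ M * (a k * a k') * ‖blockVector ξ k'‖ := by gcongr; exact hA k k'
    _ = M * a k * (a k' * ‖blockVector ξ k'‖) := by ring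

lemma blockVector_tsum_mul_eq_tsum_toEuclideanLin
    (hA : ∀ k k', ‖blockMatrix A k k'‖ ≤ M * (a k * a k'))
    (hT : Summable fun k => a k * ‖blockVector ξ k‖) (k : K) :
    blockVector (fun x => ∑' y, A x y * ξ y) k =
      ∑' k', Matrix.toEuclideanLin (blockMatrix A k k') (blockVector ξ k') := by
  have hsum : Summable fun k' => Matrix.toEuclideanLin (blockMatrix A k k') (blockVector ξ k') :=
    .of_norm_bounded (hT.mul_left (M * a k)) (norm_toEuclideanLin_blockMatrix_le hA k)
  ext i
  calc ∑' y, A ⟨k, i⟩ y * ξ y = ∑' k', ∑ i', A ⟨k, i⟩ ⟨k', i'⟩ * ξ ⟨k', i'⟩ :=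
        (summable_norm_mul_of_norm_blockMatrix_le hA hT ⟨k, i⟩).of_norm.tsum_sigma_of_fintype
    _ = _ := ((EuclideanSpace.proj i).map_tsum hsum).symm

lemma norm_blockVector_tsum_mul_le
    (hA : ∀ k k', ‖blockMatrix A k k'‖ ≤ M * (a k * a k'))
    (hT : Summable fun k => a k * ‖blockVector ξ k‖) (k : K) :
    ‖blockVector (fun x => ∑' y, A x y * ξ y) k‖ ≤
      M * a k * ∑' k', a k' * ‖blockVector ξ k'‖ := by
  rw [blockVector_tsum_mul_eq_tsum_toEuclideanLin hA hT, ← tsum_mul_left]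
  exact tsum_of_norm_bounded (hT.mul_left _).hasSum (norm_toEuclideanLin_blockMatrix_le hA k)

theorem weighted_tsum_norm_sq_tsum_mul_le
    (hA : ∀ k k', ‖blockMatrix A k k'‖ ≤ M * (a k * a k')) (ha : ∀ k, 0 ≤ a k)
    {v : K → ℝ} (hv : ∀ k, 0 < v k) (hav : Summable fun k => a k ^ 2 / v k)
    (hξ : Summable fun x : Σ k, ι k => v x.1 * ‖ξ x‖ ^ 2) :
    (∀ x, Summable fun y => ‖A x y * ξ y‖) ∧
      Summable (fun x : Σ k, ι k => (v x.1)⁻¹ * ‖∑' y, A x y * ξ y‖ ^ 2) ∧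
      ∑' x : Σ k, ι k, (v x.1)⁻¹ * ‖∑' y, A x y * ξ y‖ ^ 2 ≤
        (∑' k, a k ^ 2 / v k) ^ 2 * M ^ 2 * ∑' x : Σ k, ι k, v x.1 * ‖ξ x‖ ^ 2 := by
  have hv0 : ∀ k, 0 ≤ v k := fun k => (hv k).le
  have hv0' : ∀ k, 0 ≤ (v k)⁻¹ := fun k => inv_nonneg.2 (hv0 k)
  obtain ⟨hT, hT_sq⟩ := tsum_sq_le_tsum_mul_tsum_of_sq_le_mul
    (r := fun k => a k * ‖blockVector ξ k‖) (fun k => mul_nonneg (ha k) (norm_nonneg _))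
    (fun k => div_nonneg (sq_nonneg _) (hv0 k)) (fun k => by have := hv0 k; positivity)
    (fun k => le_of_eq (by field_simp [(hv k).ne'])) hav
    ((summable_mul_norm_sq_iff_blockVector hv0 ξ).1 hξ)
  set T := ∑' k, a k * ‖blockVector ξ k‖
  set c := ∑' k, a k ^ 2 / v k
  have hblock : ∀ k, (v k)⁻¹ * ‖blockVector (fun x => ∑' y, A x y * ξ y) k‖ ^ 2 ≤
      M ^ 2 * T ^ 2 * (a k ^ 2 / v k) := fun k =>
    calc _ ≤ (v k)⁻¹ * (M * a k * T) ^ 2 := by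
          have := hv0' k
          gcongr
          exact norm_blockVector_tsum_mul_le hA hT k
      _ = M ^ 2 * T ^ 2 * (a k ^ 2 / v k) := by ring
  have hout : Summable fun k => (v k)⁻¹ * ‖blockVector (fun x => ∑' y, A x y * ξ y) k‖ ^ 2 :=
    (hav.mul_left _).of_nonneg_of_le (fun k => by have := hv0' k; positivity) hblock
  refine ⟨summable_norm_mul_of_norm_blockMatrix_le hA hT,
    (summable_mul_norm_sq_iff_blockVector hv0' _).2 hout, ?_⟩
  rw [tsum_mul_norm_sq_eq_blockVector hv0', tsum_mul_norm_sq_eq_blockVector hv0]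
  have hc : 0 ≤ c := tsum_nonneg fun k => div_nonneg (sq_nonneg _) (hv0 k)
  calc _ ≤ ∑' k, M ^ 2 * T ^ 2 * (a k ^ 2 / v k) := hout.tsum_le_tsum hblock (hav.mul_left _)
    _ = M ^ 2 * T ^ 2 * c := tsum_mul_left
    _ ≤ M ^ 2 * (c * ∑' k, v k * ‖blockVector ξ k‖ ^ 2) * c := by gcongr
    _ = _ := by ring

end Blocks

noncomputable def logWeight (d : ℕ) (β : ℝ) (k : ℕ) : ℝ :=
  ((1 + Real.log ((d : ℝ) + 2 * k)) ^ β)⁻¹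

section HarmonicOscillator

variable {d : ℕ} {β s : ℝ}

lemma one_le_cast_add_two_mul (hd : 1 ≤ d) (k : ℕ) : (1 : ℝ) ≤ ((d + 2 * k : ℕ) : ℝ) := by
  exact_mod_cast (by omega)

lemma logWeight_pos (hd : 1 ≤ d) (k : ℕ) : 0 < logWeight d β k := by
  have := Real.log_nonneg (by exact_mod_cast one_le_cast_add_two_mul hd k : (1 : ℝ) ≤ d + 2 * k)
  unfold logWeight
  positivity

lemma norm_blockMatrix_le_of_wtBeta_mul_blockNorm_le (hd : 1 ≤ d)
    {A : IndexE d → IndexE d → ℂ} {MA : ℝ}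
    (hMA : ∀ k k', wtBeta d β k k' * blockNorm d A k k' ≤ MA) (k k' : ℕ) :
    ‖blockMatrix A k k'‖ ≤ MA * (logWeight d β k * logWeight d β k') := by
  have hpos := mul_pos (logWeight_pos (β := β) hd k) (logWeight_pos (β := β) hd k')
  have h := hMA k k'
  rw [show wtBeta d β k k' = (logWeight d β k * logWeight d β k')⁻¹ by
    simp [wtBeta, logWeight, mul_comm], inv_mul_le_iff₀ hpos] at h
  exact h.trans_eq (mul_comm _ _)

lemma summable_logWeight_sq_div_and_tsum_le (hd : 1 ≤ d) (hβ : 1 / 2 < β) (hs : 1 ≤ s) :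
    Summable (fun k => logWeight d β k ^ 2 / ((d + 2 * k : ℕ) : ℝ) ^ s) ∧
      ∑' k, logWeight d β k ^ 2 / ((d + 2 * k : ℕ) : ℝ) ^ s ≤
        ∑' n : ℕ, ((n : ℝ) * (1 + Real.log n) ^ (2 * β))⁻¹ := by
  have hf := summable_inv_nat_mul_one_add_log_rpow (show 1 < 2 * β by linarith)
  have hle : ∀ k, logWeight d β k ^ 2 / ((d + 2 * k : ℕ) : ℝ) ^ s ≤
      (((d + 2 * k : ℕ) : ℝ) * (1 + Real.log ((d + 2 * k : ℕ) : ℝ)) ^ (2 * β))⁻¹ := fun k => by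
    simpa [logWeight] using
      inv_rpow_sq_div_rpow_le_inv_mul_rpow (β := β) (one_le_cast_add_two_mul hd k) hs
  have hinj : Function.Injective fun k : ℕ => d + 2 * k := fun _ _ h => by simp_all
  have hsum := Summable.of_nonneg_of_le (fun k => by positivity) hle (hf.comp_injective hinj)
  exact ⟨hsum, hsum.tsum_le_tsum_of_inj _ hinj (fun n _ => by positivity) hle hf⟩

end HarmonicOscillator

theorem stmt8 (d : ℕ) (hd : 1 ≤ d) (β s : ℝ) (hβ : 1 / 2 < β) (hs : 1 ≤ s) :
    ∃ C > 0, ∀ (A : IndexE d → IndexE d → ℂ) (MA : ℝ),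
      (∀ k k', wtBeta d β k k' * blockNorm d A k k' ≤ MA) →
      ∀ ξ : IndexE d → ℂ,
        Summable (fun a : IndexE d => (wE d a : ℝ) ^ s * ‖ξ a‖ ^ 2) →
        (∀ a : IndexE d, Summable (fun b : IndexE d => ‖A a b * ξ b‖)) ∧
        Summable (fun a : IndexE d =>
          (wE d a : ℝ) ^ (-s) * ‖∑' b : IndexE d, A a b * ξ b‖ ^ 2) ∧
        ∑' a : IndexE d, (wE d a : ℝ) ^ (-s) * ‖∑' b : IndexE d, A a b * ξ b‖ ^ 2 ≤
          C ^ 2 * MA ^ 2 * ∑' a : IndexE d, (wE d a : ℝ) ^ s * ‖ξ a‖ ^ 2 := by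
  set C := ∑' n : ℕ, ((n : ℝ) * (1 + Real.log n) ^ (2 * β))⁻¹
  have hC : 1 ≤ C := by
    simpa [C] using (summable_inv_nat_mul_one_add_log_rpow (show 1 < 2 * β by linarith)).le_tsum
      1 fun n _ => by positivity
  refine ⟨C, by linarith, fun A MA hMA ξ hξ => ?_⟩
  obtain ⟨hc, hcC⟩ := summable_logWeight_sq_div_and_tsum_le hd hβ hs
  obtain ⟨hrow, hsum, hle⟩ := weighted_tsum_norm_sq_tsum_mul_le
    (norm_blockMatrix_le_of_wtBeta_mul_blockNorm_le hd hMA) (fun k => (logWeight_pos hd k).le)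
    (fun k => by positivity) hc hξ
  have hw : ∀ x : IndexE d, (wE d x : ℝ) ^ (-s) = ((wE d x : ℝ) ^ s)⁻¹ := fun x =>
    Real.rpow_neg (Nat.cast_nonneg _) s
  simp only [hw]
  refine ⟨hrow, hsum, hle.trans (mul_le_mul_of_nonneg_right ?_ (tsum_nonneg fun x => ?_))⟩
  · have : 0 ≤ ∑' k, logWeight d β k ^ 2 / ((d + 2 * k : ℕ) : ℝ) ^ s :=
      tsum_nonneg fun k => by positivity
    gcongr
  · positivity
end
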